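/- arXiv:1609.09447 — 2 statements merged into one kernel-verified Lean document; each statement's English description precedes it below -/
import Mathlib

section
/- For every positive integer k there exists a finite simple graph H with box_ℓ(H) ≥ k. -/
universe u

/-- A graph is an interval graph if its vertices can be assigned nonempty closed
intervals of `ℝ` so that distinct vertices are adjacent iff their intervals meet. -/
def IsIntervalGraph {V : Type*} (G : SimpleGraph V) : Prop :=
  ∃ I : V → Set ℝ,
    (∀ v, ∃ a b : ℝ, a ≤ b ∧ I v = Set.Icc a b) ∧
    ∀ u v : V, u ≠ v → (G.Adj u v ↔ (I u ∩ I v).Nonempty)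

/-- A co-interval graph is the complement of an interval graph. -/
def IsCoIntervalGraph {V : Type*} (G : SimpleGraph V) : Prop :=
  IsIntervalGraph Gᶜ

/-- `G` is a vertex-disjoint union of co-interval graphs: its vertex set can be
partitioned (here via the fibers of a map `c`) so that every edge joins two vertices of
the same part and the restriction to each part is a co-interval graph. -/
def IsUnionCoIntervalGraph {V : Type u} (G : SimpleGraph V) : Prop :=
  ∃ (ι : Type u) (c : V → ι),
    (∀ u v : V, G.Adj u v → c u = c v) ∧
    ∀ i : ι, IsCoIntervalGraph (G.induce {v | c v = i})

/-- There is a covering of the edges of `Hᶜ` by finitely many subgraphs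
`G 0, …, G (t-1)` of `Hᶜ`, each of which restricted to its non-isolated vertices is a
co-interval graph, such that every vertex is a non-isolated vertex of at most `s`
of them. -/
def LocalCoverLE {V : Type u} (H : SimpleGraph V) (s : ℕ) : Prop :=
  ∃ (t : ℕ) (G : Fin t → SimpleGraph V),
    (∀ i, G i ≤ Hᶜ) ∧
    (∀ u v : V, Hᶜ.Adj u v → ∃ i, (G i).Adj u v) ∧
    (∀ i, IsCoIntervalGraph ((G i).induce (G i).support)) ∧
    ∀ v : V, {i : Fin t | v ∈ (G i).support}.ncard ≤ s

/-- The local boxicity of `H`. -/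
noncomputable def localBoxicity {V : Type u} (H : SimpleGraph V) : ℕ :=
  sInf {s : ℕ | LocalCoverLE H s}

/-- The union boxicity of `H`: the least `k` such that `Hᶜ` is covered by `k`
subgraphs, each a vertex-disjoint union of co-interval graphs. -/
noncomputable def unionBoxicity {V : Type u} (H : SimpleGraph V) : ℕ :=
  sInf {k : ℕ | ∃ G : Fin k → SimpleGraph V,
    (∀ i, G i ≤ Hᶜ) ∧
    (∀ u v : V, Hᶜ.Adj u v → ∃ i, (G i).Adj u v) ∧
    ∀ i, IsUnionCoIntervalGraph (G i)}

/-- The boxicity of `H`: the least `d` such that `H` is the intersection of `d`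
interval graphs on its vertex set. -/
noncomputable def boxicity {V : Type u} (H : SimpleGraph V) : ℕ :=
  sInf {d : ℕ | ∃ G : Fin d → SimpleGraph V,
    (∀ i, IsIntervalGraph (G i)) ∧
    ∀ u v : V, u ≠ v → (H.Adj u v ↔ ∀ i, (G i).Adj u v)}

/-!
A local cover of `H` with load `s` compresses into a short code: every vertex records, for each
of the at most `s` co-interval graphs of the cover containing it, the label of that graph and
the ranks of its interval endpoints, and `Hᶜ` is read back from these records. On `N` vertices
there are only `N ^ O(s N)` codes, fewer than the `2 ^ (n * n)` bipartite graphs on `n + n`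
vertices once `n` is a large power of two, so one of those graphs has local boxicity above `s`.
-/

open Finset SimpleGraph

section IntervalEndpoints

variable {W : Type*}

lemma IsCoIntervalGraph.exists_endpoints {G : SimpleGraph W} (hG : IsCoIntervalGraph G) :
    ∃ a b : W → ℝ, ∀ u v, G.Adj u v ↔ b u < a v ∨ b v < a u := by
  obtain ⟨I, hI, hIadj⟩ := hG
  choose a b hab hIab using hI
  refine ⟨a, b, fun u v => ?_⟩
  rcases eq_or_ne u v with rfl | huv
  · simpa using (hab u).not_gt
  · have h := hIadj u v huv
    rw [hIab, hIab, Set.Icc_inter_Icc, Set.nonempty_Icc, compl_adj] at h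
    simp only [sup_le_iff, le_inf_iff] at h
    have := hab u
    have := hab v
    grind

lemma Finset.card_filter_lt_lt_iff {α : Type*} [LinearOrder α] {F : Finset α} {x : α}
    (hx : x ∈ F) (y : α) : #(F.filter (· < x)) < #(F.filter (· < y)) ↔ x < y := by
  constructor
  · intro h
    by_contra! hyx
    exact h.not_ge (card_le_card fun z => by
      simpa only [mem_filter] using fun ⟨hzF, hz⟩ => ⟨hzF, hz.trans_le hyx⟩)
  · intro hxy
    refine card_lt_card ((ssubset_iff_of_subset ?_).mpr ⟨x, by simp [hx, hxy]⟩)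
    intro z
    simpa only [mem_filter] using fun ⟨hzF, hz⟩ => ⟨hzF, hz.trans hxy⟩

lemma exists_fin_rank_lt_iff {α : Type*} [LinearOrder α] [Fintype W] (a b : W → α) :
    ∃ a' b' : W → Fin (2 * Fintype.card W + 1), ∀ u v, b' u < a' v ↔ b u < a v := by
  classical
  let F := univ.image a ∪ univ.image b
  have hF : #F ≤ 2 * Fintype.card W := calc
    #F ≤ #(univ.image a) + #(univ.image b) := card_union_le _ _
    _ ≤ Fintype.card W + Fintype.card W := add_le_add card_image_le card_image_le
    _ = 2 * Fintype.card W := (two_mul _).symm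
  let rank (x : α) : Fin (2 * Fintype.card W + 1) :=
    ⟨#(F.filter (· < x)), Nat.lt_succ_of_le ((card_filter_le _ _).trans hF)⟩
  refine ⟨rank ∘ a, rank ∘ b, fun u v => ?_⟩
  exact Finset.card_filter_lt_lt_iff (by simp [F]) _

lemma IsCoIntervalGraph.exists_fin_endpoints_of_induce {V : Type*} [Fintype V]
    {G : SimpleGraph V} {S : Set V} (hG : IsCoIntervalGraph (G.induce S)) :
    ∃ a b : V → Fin (2 * Fintype.card V + 1),
      ∀ u ∈ S, ∀ v ∈ S, (G.Adj u v ↔ b u < a v ∨ b v < a u) := by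
  classical
  obtain ⟨a, b, hab⟩ := hG.exists_endpoints
  let extend (f : S → ℝ) (v : V) : ℝ := if h : v ∈ S then f ⟨v, h⟩ else 0
  obtain ⟨a', b', h'⟩ := exists_fin_rank_lt_iff (extend a) (extend b)
  refine ⟨a', b', fun u hu v hv => ?_⟩
  simpa [h', extend, hu, hv] using hab ⟨u, hu⟩ ⟨v, hv⟩

lemma isIntervalGraph_bot [Countable W] : IsIntervalGraph (⊥ : SimpleGraph W) := by
  obtain ⟨f, hf⟩ := Countable.exists_injective_nat W
  refine ⟨fun v => Set.Icc (f v : ℝ) (f v), fun v => ⟨_, _, le_rfl, rfl⟩, fun u v huv => ?_⟩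
  simp [hf.eq_iff, huv]

lemma isCoIntervalGraph_top [Countable W] : IsCoIntervalGraph (⊤ : SimpleGraph W) := by
  rw [IsCoIntervalGraph, compl_top]
  exact isIntervalGraph_bot

end IntervalEndpoints

lemma SimpleGraph.induce_support_fromEdgeSet_singleton {V : Type*} (e : Sym2 V) :
    (fromEdgeSet {e}).induce (fromEdgeSet {e}).support = ⊤ := by
  ext ⟨x, hx⟩ ⟨y, hy⟩
  simp only [mem_support, fromEdgeSet_adj, Set.mem_singleton_iff] at hx hy
  obtain ⟨x', rfl, -⟩ := hx
  obtain ⟨y', hy, -⟩ := hy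
  simp only [comap_adj, Function.Embedding.subtype_apply, fromEdgeSet_adj,
    Set.mem_singleton_iff, top_adj, ne_eq, Subtype.mk.injEq]
  refine ⟨fun h => h.2, fun hxy =>
    ⟨((Sym2.mem_and_mem_iff hxy).mp ⟨Sym2.mem_mk_left x x', ?_⟩).symm, hxy⟩⟩
  rw [← hy]
  exact Sym2.mem_mk_left y y'

-- Each vertex carries triples (label, left end, right end) of labelled closed intervals.
def labelDisjointGraph {V ι M : Type*} [LT M] (T : V → Finset (ι × M × M)) : SimpleGraph V :=
  fromRel fun u v => ∃ p ∈ T u, ∃ q ∈ T v, p.1 = q.1 ∧ p.2.2 < q.2.1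

section LocalCover

variable {V : Type u} {H : SimpleGraph V} {s : ℕ}

structure IsLocalCover (H : SimpleGraph V) (s : ℕ) {t : ℕ} (G : Fin t → SimpleGraph V) :
    Prop where
  le_compl : ∀ i, G i ≤ Hᶜ
  exists_adj : ∀ u v, Hᶜ.Adj u v → ∃ i, (G i).Adj u v
  isCoIntervalGraph : ∀ i, IsCoIntervalGraph ((G i).induce (G i).support)
  ncard_le : ∀ v, {i | v ∈ (G i).support}.ncard ≤ s

lemma localCoverLE_iff :
    LocalCoverLE H s ↔ ∃ t, ∃ G : Fin t → SimpleGraph V, IsLocalCover H s G :=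
  ⟨fun ⟨t, G, h₁, h₂, h₃, h₄⟩ => ⟨t, G, h₁, h₂, h₃, h₄⟩, fun ⟨t, G, h⟩ => ⟨t, G, h.1, h.2, h.3, h.4⟩⟩

lemma LocalCoverLE.mono {s' : ℕ} (h : LocalCoverLE H s) (hs : s ≤ s') : LocalCoverLE H s' :=
  let ⟨t, G, h₁, h₂, h₃, h₄⟩ := h
  ⟨t, G, h₁, h₂, h₃, fun v => (h₄ v).trans hs⟩

lemma exists_localCoverLE [Fintype V] : ∃ s, LocalCoverLE H s := by
  classical
  let e := Hᶜ.edgeFinset.equivFin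
  refine ⟨#Hᶜ.edgeFinset,
    localCoverLE_iff.mpr ⟨_, fun i => fromEdgeSet {(e.symm i).1}, ?_, ?_, ?_, ?_⟩⟩
  · intro i
    simpa using .inr (mem_edgeFinset.mp (e.symm i).2)
  · intro u v huv
    refine ⟨e ⟨s(u, v), mem_edgeFinset.mpr huv⟩, ?_⟩
    simpa [fromEdgeSet_adj] using huv.ne
  · intro i
    rw [induce_support_fromEdgeSet_singleton]
    exact isCoIntervalGraph_top
  · intro v
    simpa using Set.ncard_le_card {i | v ∈ (fromEdgeSet {(e.symm i).1}).support}

variable {t : ℕ} {G : Fin t → SimpleGraph V}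

lemma IsLocalCover.compl_adj_iff (hG : IsLocalCover H s G) {u v : V} :
    Hᶜ.Adj u v ↔ ∃ i, (G i).Adj u v :=
  ⟨hG.exists_adj u v, fun ⟨i, hi⟩ => hG.le_compl i hi⟩

lemma IsLocalCover.exists_card_le [Fintype V] (hG : IsLocalCover H s G) :
    ∃ t' ≤ s * Fintype.card V, ∃ G' : Fin t' → SimpleGraph V, IsLocalCover H s G' := by
  classical
  let U := univ.filter fun i => (G i).support.Nonempty
  let e := U.orderEmbOfFin rfl
  refine ⟨#U, ?_, fun j => G (e j), fun j => hG.le_compl _, ?_, fun j => hG.isCoIntervalGraph _,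
    fun v => ?_⟩
  · calc #U ≤ #(univ.biUnion fun v => univ.filter fun i => v ∈ (G i).support) :=
          card_le_card fun i hi => by simpa [U, Set.Nonempty] using (mem_filter.mp hi).2
      _ ≤ ∑ v, #(univ.filter fun i => v ∈ (G i).support) := card_biUnion_le
      _ ≤ ∑ _v : V, s := sum_le_sum fun v _ => by
          simpa [← Set.ncard_coe_finset] using hG.ncard_le v
      _ = s * Fintype.card V := by simp [mul_comm]
  · intro u v huv
    obtain ⟨i, hi⟩ := hG.exists_adj u v huv
    obtain ⟨j, rfl⟩ : i ∈ Set.range e := by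
      rw [range_orderEmbOfFin]
      simpa [U] using ⟨u, v, hi⟩
    exact ⟨j, hi⟩
  · exact (Set.ncard_le_ncard_of_injOn e (fun j hj => hj) e.injective.injOn).trans (hG.ncard_le v)


lemma LocalCoverLE.exists_code [Fintype V] (h : LocalCoverLE H s) :
    ∃ T : V → {T : Finset (Fin (s * Fintype.card V) × Fin (2 * Fintype.card V + 1) ×
        Fin (2 * Fintype.card V + 1)) // #T ≤ s},
      labelDisjointGraph (fun v => (T v).1) = Hᶜ := by
  classical
  obtain ⟨t₀, G₀, hG₀⟩ := localCoverLE_iff.mp h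
  obtain ⟨t, ht, G, hG⟩ := hG₀.exists_card_le
  choose a b hab using fun i => (hG.isCoIntervalGraph i).exists_fin_endpoints_of_induce
  have hadj (i : Fin t) (u v : V) : (G i).Adj u v ↔
      u ∈ (G i).support ∧ v ∈ (G i).support ∧ (b i u < a i v ∨ b i v < a i u) :=
    ⟨fun huv => ⟨⟨v, huv⟩, ⟨u, huv.symm⟩, (hab i u ⟨v, huv⟩ v ⟨u, huv.symm⟩).mp huv⟩,
      fun ⟨hu, hv, h⟩ => (hab i u hu v hv).mpr h⟩
  let S (v : V) := univ.filter fun i => v ∈ (G i).support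
  refine ⟨fun v => ⟨(S v).image fun i => (Fin.castLE ht i, a i v, b i v), ?_⟩, ?_⟩
  · exact card_image_le.trans (by simpa [S, ← Set.ncard_coe_finset] using hG.ncard_le v)
  · ext u v
    simp only [labelDisjointGraph, fromRel_adj, hG.compl_adj_iff, hadj]
    simp only [S, mem_image, mem_filter, mem_univ, true_and, exists_exists_and_eq_and,
      Fin.castLE_inj, ↓existsAndEq]
    constructor
    · rintro ⟨-, ⟨i, hu, hv, h⟩ | ⟨i, hv, hu, h⟩⟩
      exacts [⟨i, hu, hv, .inl h⟩, ⟨i, hu, hv, .inr h⟩]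
    · rintro ⟨i, hu, hv, h⟩
      exact ⟨((hadj i u v).mpr ⟨hu, hv, h⟩).ne,
        h.imp (fun h => ⟨i, hu, hv, h⟩) (fun h => ⟨i, hv, hu, h⟩)⟩

end LocalCover

lemma Fintype.card_finset_card_le_le (α : Type*) [Fintype α] (s : ℕ) :
    Fintype.card {T : Finset α // #T ≤ s} ≤ (Fintype.card α + 1) ^ s := by
  classical
  let f (c : Fin s → Option α) : {T : Finset α // #T ≤ s} :=
    ⟨(univ.image c).eraseNone, (card_eraseNone_le _).trans (card_image_le.trans (by simp))⟩
  have hf : Function.Surjective f := by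
    rintro ⟨T, hT⟩
    refine ⟨fun j => T.toList[j.1]?, Subtype.ext (Finset.ext fun x => ?_)⟩
    simp only [f, mem_eraseNone, mem_image, mem_univ, true_and]
    rw [← mem_toList, List.mem_iff_getElem?]
    exact ⟨fun ⟨j, hj⟩ => ⟨j, hj⟩, fun ⟨j, hj⟩ =>
      ⟨⟨j, (List.getElem?_eq_some_iff.mp hj).1.trans_le (by simpa using hT)⟩, hj⟩⟩
  simpa using Fintype.card_le_of_surjective f hf

def bipartiteOfRel {α β : Type*} (R : Finset (α × β)) : SimpleGraph (α ⊕ β) :=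
  fromRel fun x y => ∃ p ∈ R, x = .inl p.1 ∧ y = .inr p.2

lemma bipartiteOfRel_adj_inl_inr {α β : Type*} (R : Finset (α × β)) (a : α) (b : β) :
    (bipartiteOfRel R).Adj (.inl a) (.inr b) ↔ (a, b) ∈ R := by
  simp [bipartiteOfRel]

lemma bipartiteOfRel_injective {α β : Type*} :
    Function.Injective (bipartiteOfRel (α := α) (β := β)) := fun R R' h => by
  ext ⟨a, b⟩
  rw [← bipartiteOfRel_adj_inl_inr, h, bipartiteOfRel_adj_inl_inr]

lemma exists_lt_two_pow (c : ℕ) : ∃ m, 8 ≤ m ∧ c * m < 2 ^ m := by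
  refine ⟨2 * (2 * c + 4), by omega, ?_⟩
  have := (2 * c + 4).lt_two_pow_self
  rw [pow_mul', sq]
  nlinarith

lemma code_count_lt_two_pow {s m : ℕ} (hm8 : 8 ≤ m) (hm : 8 * s * m < 2 ^ m) :
    ((s * (2 ^ m + 2 ^ m) * ((2 * (2 ^ m + 2 ^ m) + 1) * (2 * (2 ^ m + 2 ^ m) + 1)) + 1) ^ s) ^
      (2 ^ m + 2 ^ m) < 2 ^ (2 ^ m * 2 ^ m) := by
  set n := 2 ^ m with hn
  have hn51 : 51 * s + 1 ≤ n := by nlinarith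
  have hbase : s * (n + n) * ((2 * (n + n) + 1) * (2 * (n + n) + 1)) + 1 ≤ n ^ 4 := calc
    _ ≤ s * (n + n) * (5 * n * (5 * n)) + 1 := by
      have : 2 * (n + n) + 1 ≤ 5 * n := by omega
      gcongr
    _ = 50 * s * n ^ 3 + 1 := by ring
    _ ≤ (51 * s + 1) * n ^ 3 := by nlinarith [Nat.one_le_pow 3 n (by omega)]
    _ ≤ n ^ 4 := by rw [pow_succ' n 3]; gcongr
  calc _ ≤ ((n ^ 4) ^ s) ^ (n + n) := by gcongr
    _ = 2 ^ (8 * s * m * n) := by rw [hn, ← pow_mul, ← pow_mul, ← pow_mul]; ring_nf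
    _ < 2 ^ (n * n) :=
      Nat.pow_lt_pow_right (by norm_num) (Nat.mul_lt_mul_of_pos_right hm (by omega))

lemma exists_not_localCoverLE (s : ℕ) :
    ∃ n, ∃ H : SimpleGraph (Fin n ⊕ Fin n), ¬ LocalCoverLE H s := by
  obtain ⟨m, hm8, hm⟩ := exists_lt_two_pow (8 * s)
  refine ⟨2 ^ m, ?_⟩
  by_contra! hcover
  choose T hT using fun H => (hcover H).exists_code
  have hinj : Function.Injective (T ∘ bipartiteOfRel) := fun R R' h => by
    apply bipartiteOfRel_injective
    rw [← compl_inj_iff, ← hT, ← hT]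
    exact congrArg (fun T => labelDisjointGraph fun v => (T v).1) h
  have hcard := Fintype.card_le_of_injective _ hinj
  rw [Fintype.card_fun] at hcard
  replace hcard := hcard.trans (Nat.pow_le_pow_left (Fintype.card_finset_card_le_le _ s) _)
  simp only [Fintype.card_finset, Fintype.card_prod, Fintype.card_fin, Fintype.card_sum] at hcard
  exact (code_count_lt_two_pow hm8 hm).not_ge hcard

theorem stmt_10_general (k : ℕ) :
    ∃ (V : Type) (_ : Fintype V) (H : SimpleGraph V), k ≤ localBoxicity H := by
  obtain ⟨n, H, hH⟩ := exists_not_localCoverLE (k - 1)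
  refine ⟨_, inferInstance, H, le_csInf exists_localCoverLE fun b hb => ?_⟩
  by_contra! hbk
  exact hH (hb.mono (by omega))

/-- For every positive integer `k` there is a finite graph `H`
with `box_ℓ(H) ≥ k`. -/
theorem stmt_10 (k : ℕ) (hk : 0 < k) :
    ∃ (V : Type) (_ : Fintype V) (H : SimpleGraph V), k ≤ localBoxicity H :=
  stmt_10_general k
end

section
/- Let H be a finite simple graph and k a positive integer. Then ūbox(H) ≤ k if and only if there exist positive integers d_1, …, d_k and, for each vertex v and each i ∈ {1,…,k}, a box B_i(v) = J_{i,1}(v) × ⋯ × J_{i,d_i}(v) ⊆ ℝ^{d_i}, where each factor J_{i,j}(v) is either all of ℝ or a nonempty closed interval and for each i at most one of the factors J_{i,1}(v), …, J_{i,d_i}(v) is different from ℝ, such that two distinct vertices u, v are adjacent in H if and only if B_i(u) ∩ B_i(v) ≠ ∅ for every i ∈ {1,…,k}. -/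
universe u

/-!
A disjoint union of co-interval graphs is the same thing as the disjointness graph of a family
of `1`-local boxes: the part containing a vertex names the one coordinate in which its box is
bounded, and its interval in the co-interval representation of that part is the bounded factor.
Two such boxes are disjoint iff they are bounded in the same coordinate with disjoint factors,
i.e. iff the vertices lie in the same part and are adjacent there. So `k` unions of co-interval
graphs covering `Hᶜ` are exactly `k` families of `1`-local boxes whose intersections describe `H`.
-/

open Set

section OneLocalBox

variable {κ : Type*}

/-- A `1`-local box in `ℝ^κ`, given by its family of factors. -/
def IsOneLocalBox (J : κ → Set ℝ) : Prop :=
  (∀ j, J j = univ ∨ ∃ a b : ℝ, a ≤ b ∧ J j = Icc a b) ∧ {j | J j ≠ univ}.Subsingleton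

lemma IsOneLocalBox.nonempty {J : κ → Set ℝ} (hJ : IsOneLocalBox J) (j : κ) :
    (J j).Nonempty := by
  rcases hJ.1 j with h | ⟨a, b, hab, h⟩ <;> rw [h]
  exacts [univ_nonempty, nonempty_Icc.2 hab]

lemma IsOneLocalBox.ne_univ_of_disjoint {J J' : κ → Set ℝ} (hJ' : IsOneLocalBox J') {j : κ}
    (h : Disjoint (J j) (J' j)) : J j ≠ univ := by
  rintro hj
  rw [hj, univ_disjoint] at h
  exact (hJ'.nonempty j).ne_empty h

open Classical in
noncomputable def boundedCoord (J : κ → Set ℝ) : Option κ :=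
  if h : ∃ j, J j ≠ univ then some h.choose else none

lemma IsOneLocalBox.boundedCoord_eq_some_iff {J : κ → Set ℝ} (hJ : IsOneLocalBox J) {j : κ} :
    boundedCoord J = some j ↔ J j ≠ univ := by
  unfold boundedCoord
  split_ifs with h
  · exact Option.some_inj.trans ⟨fun e => e ▸ h.choose_spec, fun hj => hJ.2 h.choose_spec hj⟩
  · push Not at h
    simp [h j]

def localBox [DecidableEq κ] (j : κ) (S : Set ℝ) : κ → Set ℝ :=
  Function.update (fun _ => univ) j S

lemma isOneLocalBox_localBox [DecidableEq κ] {j : κ} {a b : ℝ} (hab : a ≤ b) :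
    IsOneLocalBox (localBox j (Icc a b)) := by
  have hj : ∀ l, localBox j (Icc a b) l ≠ univ → l = j := fun l hl => by
    by_contra h
    simp [localBox, h] at hl
  refine ⟨fun l => ?_, fun l hl l' hl' => (hj l hl).trans (hj l' hl').symm⟩
  rcases eq_or_ne l j with rfl | h
  · exact Or.inr ⟨a, b, hab, by simp [localBox]⟩
  · exact Or.inl (by simp [localBox, h])

lemma disjoint_univ_pi_localBox_iff [DecidableEq κ] {j j' : κ} {S T : Set ℝ} (hS : S.Nonempty)
    (hT : T.Nonempty) :
    Disjoint (univ.pi (localBox j S)) (univ.pi (localBox j' T)) ↔ j = j' ∧ Disjoint S T := by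
  rw [disjoint_univ_pi]
  constructor
  · rintro ⟨l, hl⟩
    by_cases hj : l = j <;> by_cases hj' : l = j' <;> subst_vars <;>
      simp_all [localBox, Function.update_of_ne, hS.ne_empty, hT.ne_empty]
  · rintro ⟨rfl, h⟩
    exact ⟨j, by simpa [localBox] using h⟩

end OneLocalBox

lemma setOf_forall_mem_eq_univ_pi {κ α : Type*} (J : κ → Set α) :
    {p : κ → α | ∀ j, p j ∈ J j} = univ.pi J := by
  ext; simp

lemma exists_fin_relabelling {V ι : Type*} [Finite V] (c : V → ι) :
    ∃ d, 0 < d ∧ ∃ f : V → Fin d, ∀ u v, f u = f v ↔ c u = c v := by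
  obtain ⟨n, ⟨e⟩⟩ := Finite.exists_equiv_fin (range c)
  exact ⟨n + 1, n.succ_pos, fun v => (e ⟨c v, v, rfl⟩).castSucc,
    fun u v => by simp [Subtype.ext_iff]⟩

namespace SimpleGraph

variable {V : Type u}

lemma isCoIntervalGraph_iff {G : SimpleGraph V} :
    IsCoIntervalGraph G ↔ ∃ I : V → Set ℝ, (∀ v, ∃ a b : ℝ, a ≤ b ∧ I v = Icc a b) ∧
      ∀ u v, u ≠ v → (G.Adj u v ↔ Disjoint (I u) (I v)) := by
  refine exists_congr fun I => and_congr_right fun _ => forall₂_congr fun u v =>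
    imp_congr_right fun huv => ?_
  rw [compl_adj, ← not_disjoint_iff_nonempty_inter, and_iff_right huv, not_iff_not]

/-- The parts and the interval representations of all parts, flattened into a single colouring
`c` and a single interval assignment `I`. -/
lemma isUnionCoIntervalGraph_iff {G : SimpleGraph V} :
    IsUnionCoIntervalGraph G ↔
      ∃ (ι : Type u) (c : V → ι) (I : V → Set ℝ), (∀ v, ∃ a b : ℝ, a ≤ b ∧ I v = Icc a b) ∧
        ∀ u v, u ≠ v → (G.Adj u v ↔ c u = c v ∧ Disjoint (I u) (I v)) := by
  constructor
  · rintro ⟨ι, c, hc, hparts⟩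
    simp only [isCoIntervalGraph_iff] at hparts
    choose I hI hIadj using hparts
    have hI_eq : ∀ i w (hw : c w = i), I (c w) ⟨w, rfl⟩ = I i ⟨w, hw⟩ := by
      rintro _ w rfl; rfl
    refine ⟨ι, c, fun v => I (c v) ⟨v, rfl⟩, fun v => hI _ _, fun u v huv => ?_⟩
    by_cases hcuv : c u = c v
    · beta_reduce
      rw [hI_eq _ u hcuv, ← hIadj (c v) ⟨u, hcuv⟩ ⟨v, rfl⟩ (by simpa using huv)]
      simp [hcuv]
    · exact iff_of_false (fun h => hcuv (hc u v h)) fun h => hcuv h.1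
  · rintro ⟨ι, c, I, hI, hadj⟩
    refine ⟨ι, c, fun u v h => ((hadj u v h.ne).1 h).1, fun i => ?_⟩
    refine isCoIntervalGraph_iff.2 ⟨fun w => I w, fun w => hI w, ?_⟩
    rintro ⟨u, hu⟩ ⟨v, hv⟩ huv
    have hcuv : c u = c v := (hu : c u = i).trans (hv : c v = i).symm
    simpa [hcuv] using hadj u v (Subtype.coe_ne_coe.2 huv)

lemma isUnionCoIntervalGraph_bot : IsUnionCoIntervalGraph (⊥ : SimpleGraph V) :=
  isUnionCoIntervalGraph_iff.2
    ⟨V, id, fun _ => Icc 0 0, fun _ => ⟨0, 0, le_rfl, rfl⟩, fun u v huv => by simp [huv]⟩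

lemma isUnionCoIntervalGraph_edge (a b : V) : IsUnionCoIntervalGraph (edge a b) := by
  classical
  -- `b` joins the part of `a`; every other vertex is a part of its own.
  refine isUnionCoIntervalGraph_iff.2 ⟨V, fun v => if v = b then a else v,
    fun v => if v = b then Icc 1 1 else Icc 0 0, fun v => ?_, fun u v huv => ?_⟩
  · dsimp only
    split_ifs <;> exact ⟨_, _, le_rfl, rfl⟩
  · rw [edge_adj]
    by_cases hu : u = b <;> by_cases hv : v = b <;> simp_all [eq_comm]

def disjointnessGraph {X : Type*} (B : V → Set X) : SimpleGraph V where
  Adj u v := u ≠ v ∧ Disjoint (B u) (B v)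
  symm := ⟨fun _ _ h => ⟨h.1.symm, h.2.symm⟩⟩
  loopless := ⟨fun _ h => h.1 rfl⟩

@[simp]
lemma disjointnessGraph_adj {X : Type*} {B : V → Set X} {u v : V} :
    (disjointnessGraph B).Adj u v ↔ u ≠ v ∧ Disjoint (B u) (B v) :=
  Iff.rfl

lemma isUnionCoIntervalGraph_disjointnessGraph {κ : Type u} {J : V → κ → Set ℝ}
    (hJ : ∀ v, IsOneLocalBox (J v)) :
    IsUnionCoIntervalGraph (disjointnessGraph fun v => univ.pi (J v)) := by
  -- The vertices whose box is all of `ℝ^κ` form one part, with a common interval.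
  refine isUnionCoIntervalGraph_iff.2 ⟨Option κ, fun v => boundedCoord (J v),
    fun v => (boundedCoord (J v)).elim (Icc 0 0) (J v), fun v => ?_, fun u v huv => ?_⟩
  · dsimp only
    cases h : boundedCoord (J v) with
    | none => exact ⟨0, 0, le_rfl, rfl⟩
    | some j => exact ((hJ v).1 j).resolve_left ((hJ v).boundedCoord_eq_some_iff.1 h)
  rw [disjointnessGraph_adj, disjoint_univ_pi, and_iff_right huv]
  constructor
  · rintro ⟨j, hj⟩
    have hu := (hJ u).boundedCoord_eq_some_iff.2 ((hJ v).ne_univ_of_disjoint hj)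
    have hv := (hJ v).boundedCoord_eq_some_iff.2 ((hJ u).ne_univ_of_disjoint hj.symm)
    simp [hu, hv, hj]
  · rintro ⟨hc, hd⟩
    dsimp only at hc hd
    cases h : boundedCoord (J u) with
    | none =>
      rw [h, ← hc, h] at hd
      simp at hd
    | some j =>
      rw [h, ← hc, h] at hd
      exact ⟨j, hd⟩

lemma exists_oneLocalBoxes_of_isUnionCoIntervalGraph [Finite V] {G : SimpleGraph V}
    (hG : IsUnionCoIntervalGraph G) :
    ∃ d, 0 < d ∧ ∃ J : V → Fin d → Set ℝ, (∀ v, IsOneLocalBox (J v)) ∧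
      G = disjointnessGraph fun v => univ.pi (J v) := by
  obtain ⟨ι, c, I, hI, hadj⟩ := isUnionCoIntervalGraph_iff.1 hG
  choose a b hab hIab using hI
  obtain rfl : I = fun v => Icc (a v) (b v) := funext hIab
  obtain ⟨d, hd, f, hf⟩ := exists_fin_relabelling c
  refine ⟨d, hd, fun v => localBox (f v) (Icc (a v) (b v)),
    fun v => isOneLocalBox_localBox (hab v), ?_⟩
  ext u v
  have hne : ∀ w, (Icc (a w) (b w)).Nonempty := fun w => nonempty_Icc.2 (hab w)
  rw [disjointnessGraph_adj, disjoint_univ_pi_localBox_iff (hne u) (hne v), hf]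
  exact ⟨fun h => ⟨G.ne_of_adj h, (hadj u v (G.ne_of_adj h)).1 h⟩,
    fun h => (hadj u v h.1).2 h.2⟩

def HasUnionCoIntervalCover (H : SimpleGraph V) (k : ℕ) : Prop :=
  ∃ G : Fin k → SimpleGraph V, (∀ i, G i ≤ Hᶜ) ∧ (∀ u v, Hᶜ.Adj u v → ∃ i, (G i).Adj u v) ∧
    ∀ i, IsUnionCoIntervalGraph (G i)

lemma HasUnionCoIntervalCover.mono {H : SimpleGraph V} {m n : ℕ}
    (h : H.HasUnionCoIntervalCover m) (hmn : m ≤ n) : H.HasUnionCoIntervalCover n := by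
  obtain ⟨G, hle, hcover, hG⟩ := h
  refine ⟨fun i => if hi : (i : ℕ) < m then G ⟨i, hi⟩ else ⊥, fun i => ?_, fun u v huv => ?_,
    fun i => ?_⟩
  · dsimp only
    split_ifs
    exacts [hle _, bot_le]
  · obtain ⟨i, hi⟩ := hcover u v huv
    exact ⟨i.castLE hmn, by simpa using hi⟩
  · dsimp only
    split_ifs
    exacts [hG _, isUnionCoIntervalGraph_bot]

/-- Cover `Hᶜ` by its single edges. -/
lemma exists_hasUnionCoIntervalCover [Finite V] (H : SimpleGraph V) :
    ∃ k, H.HasUnionCoIntervalCover k := by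
  classical
  let e := (Finite.equivFin (V × V)).symm
  refine ⟨_, fun i => if H.Adj (e i).1 (e i).2 then ⊥ else edge (e i).1 (e i).2,
    fun i => ?_, fun u v huv => ⟨e.symm (u, v), ?_⟩, fun i => ?_⟩
  · dsimp only
    split_ifs with h
    · exact bot_le
    · exact (edge_le_iff _).2 (or_iff_not_imp_left.2 fun hne => (compl_adj H _ _).2 ⟨hne, h⟩)
  · rw [compl_adj] at huv
    simp [huv, edge_adj]
  · dsimp only
    split_ifs
    exacts [isUnionCoIntervalGraph_bot, isUnionCoIntervalGraph_edge _ _]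

lemma unionBoxicity_le_iff [Finite V] {H : SimpleGraph V} {k : ℕ} :
    unionBoxicity H ≤ k ↔ H.HasUnionCoIntervalCover k :=
  ⟨fun h => HasUnionCoIntervalCover.mono (Nat.sInf_mem (exists_hasUnionCoIntervalCover H)) h,
    fun h => Nat.sInf_le h⟩

lemma hasUnionCoIntervalCover_iff {H : SimpleGraph V} {k : ℕ} :
    H.HasUnionCoIntervalCover k ↔ ∃ G : Fin k → SimpleGraph V,
      (∀ i, IsUnionCoIntervalGraph (G i)) ∧ ∀ u v, u ≠ v → (H.Adj u v ↔ ∀ i, ¬(G i).Adj u v) := by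
  constructor
  · rintro ⟨G, hle, hcover, hG⟩
    refine ⟨G, hG, fun u v huv => ⟨fun h i hi => ((hle i hi).2 h), fun h => ?_⟩⟩
    by_contra hH
    obtain ⟨i, hi⟩ := hcover u v ((compl_adj H u v).2 ⟨huv, hH⟩)
    exact h i hi
  · rintro ⟨G, hG, hH⟩
    refine ⟨G, fun i u v hi => (compl_adj H u v).2 ⟨(G i).ne_of_adj hi,
      fun h => (hH u v ((G i).ne_of_adj hi)).1 h i hi⟩, fun u v huv => ?_, hG⟩
    rw [compl_adj, hH u v huv.1] at huv
    simpa using huv.2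

end SimpleGraph

open SimpleGraph in
theorem stmt_16_general {V : Type} [Fintype V] (H : SimpleGraph V) (k : ℕ) :
    unionBoxicity H ≤ k ↔
    ∃ d : Fin k → ℕ, (∀ i, 0 < d i) ∧
      ∃ J : V → (i : Fin k) → Fin (d i) → Set ℝ,
        (∀ (v : V) (i : Fin k) (j : Fin (d i)),
          J v i j = Set.univ ∨ ∃ a b : ℝ, a ≤ b ∧ J v i j = Set.Icc a b) ∧
        (∀ (v : V) (i : Fin k), {j : Fin (d i) | J v i j ≠ Set.univ}.ncard ≤ 1) ∧
        ∀ u v : V, u ≠ v → (H.Adj u v ↔ ∀ i : Fin k,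
          ({p : Fin (d i) → ℝ | ∀ j, p j ∈ J u i j} ∩
           {p : Fin (d i) → ℝ | ∀ j, p j ∈ J v i j}).Nonempty) := by
  simp only [unionBoxicity_le_iff, hasUnionCoIntervalCover_iff, setOf_forall_mem_eq_univ_pi,
    ← not_disjoint_iff_nonempty_inter, ncard_le_one_iff_subsingleton]
  constructor
  · rintro ⟨G, hG, hH⟩
    choose d hd J hJ hGJ using fun i => exists_oneLocalBoxes_of_isUnionCoIntervalGraph (hG i)
    refine ⟨d, hd, fun v i => J i v, fun v i => (hJ i v).1, fun v i => (hJ i v).2,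
      fun u v huv => ?_⟩
    simp [hH u v huv, hGJ, huv]
  · rintro ⟨d, -, J, hJ, hJ1, hH⟩
    refine ⟨fun i => disjointnessGraph fun v => univ.pi (J v i),
      fun i => isUnionCoIntervalGraph_disjointnessGraph fun v => ⟨hJ v i, hJ1 v i⟩,
      fun u v huv => ?_⟩
    simp [hH u v huv, huv]

/-- `ūbox(H) ≤ k` iff there are dimensions `d 0, …, d (k-1)` and for
each vertex `v` boxes `B i v ⊆ ℝ^(d i)` (for `i = 0, …, k-1`), each a product of factors
which are all of `ℝ` or nonempty closed bounded intervals with at most one factor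
different from `ℝ` (i.e. each box is 1-local), such that two distinct vertices `u, v`
are adjacent in `H` iff `B i u ∩ B i v ≠ ∅` for every `i`. -/
theorem stmt_16 {V : Type} [Fintype V] (H : SimpleGraph V) (k : ℕ) (hk : 0 < k) :
    unionBoxicity H ≤ k ↔
    ∃ d : Fin k → ℕ, (∀ i, 0 < d i) ∧
      ∃ J : V → (i : Fin k) → Fin (d i) → Set ℝ,
        (∀ (v : V) (i : Fin k) (j : Fin (d i)),
          J v i j = Set.univ ∨ ∃ a b : ℝ, a ≤ b ∧ J v i j = Set.Icc a b) ∧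
        (∀ (v : V) (i : Fin k), {j : Fin (d i) | J v i j ≠ Set.univ}.ncard ≤ 1) ∧
        ∀ u v : V, u ≠ v → (H.Adj u v ↔ ∀ i : Fin k,
          ({p : Fin (d i) → ℝ | ∀ j, p j ∈ J u i j} ∩
           {p : Fin (d i) → ℝ | ∀ j, p j ∈ J v i j}).Nonempty) :=
  stmt_16_general H k
end
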